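/- arXiv:2501.06676 — 6 statements merged into one kernel-verified Lean document; each statement's English description precedes it below -/
import Mathlib

section
/- Let S be an L-unipotent semigroup. For every pair of distinct elements a, b ∈ S there exists an idempotent f ∈ S such that f*a ≠ f*b. In particular, S is left reductive: if x*a = x*b for all x ∈ S, then a = b. -/
/-- The principal left ideal `Sa = {x*a : x ∈ S}` of an element of a semigroup. -/
def leftIdeal {S : Type*} [Semigroup S] (a : S) : Set S := {y | ∃ x : S, y = x * a}

/-- A semigroup is (von Neumann) regular if every element `a` has some `x` with `a*x*a = a`. -/
def IsRegularSemigroup (S : Type*) [Semigroup S] : Prop :=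
  ∀ a : S, ∃ x : S, a * x * a = a

/-- A regular semigroup is `L`-unipotent if any two `L`-related idempotents are equal. -/
def IsLUnipotent (S : Type*) [Semigroup S] : Prop :=
  IsRegularSemigroup S ∧
    ∀ e f : S, e * e = e → f * f = f → leftIdeal e = leftIdeal f → e = f

/-! If no idempotent separates `a` from `b`, then any inner inverse `x` of `a` (`a*x*a = a`) is
also one of `b`, and `a*x`, `b*x` are `L`-related idempotents. `L`-unipotency makes them equal,
so `a = a*x*b = b*x*b = b`. -/

section Semigroup

variable {S : Type*} [Semigroup S]

theorem IsIdempotentElem.mul_of_mul_mul_eq_self {a x : S} (h : a * x * a = a) :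
    IsIdempotentElem (a * x) := by
  rw [IsIdempotentElem, ← mul_assoc, h]

theorem leftIdeal_subset_of_mul_eq {a b : S} (h : a * b = a) : leftIdeal a ⊆ leftIdeal b := by
  rintro _ ⟨w, rfl⟩
  exact ⟨w * a, by rw [mul_assoc, h]⟩

theorem leftIdeal_eq_of_mul_eq_of_mul_eq {a b : S} (hab : a * b = a) (hba : b * a = b) :
    leftIdeal a = leftIdeal b :=
  (leftIdeal_subset_of_mul_eq hab).antisymm (leftIdeal_subset_of_mul_eq hba)

section NotSeparated

variable {a b : S} (hab : ∀ f : S, IsIdempotentElem f → f * a = f * b)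
include hab

theorem eq_mul_mul_of_forall_idempotent_mul_eq {x : S} (hx : a * x * a = a) :
    a = a * x * b := by
  rw [← hab (a * x) (.mul_of_mul_mul_eq_self hx), hx]

theorem mul_mul_eq_self_of_forall_idempotent_mul_eq (hS : IsRegularSemigroup S) {x : S}
    (hx : a * x * a = a) : b * x * b = b := by
  obtain ⟨y, hy⟩ := hS b
  have hb : b = b * y * a :=
    eq_mul_mul_of_forall_idempotent_mul_eq (fun f hf ↦ (hab f hf).symm) hy
  calc b * x * b = b * y * a * x * b := by rw [← hb]
    _ = b * y * (a * x * b) := by simp only [mul_assoc]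
    _ = b := by rw [← eq_mul_mul_of_forall_idempotent_mul_eq hab hx, ← hb]

theorem eq_of_forall_idempotent_mul_eq (hS : IsLUnipotent S) : a = b := by
  obtain ⟨hreg, huni⟩ := hS
  obtain ⟨x, hx⟩ := hreg a
  have ha : a = a * x * b := eq_mul_mul_of_forall_idempotent_mul_eq hab hx
  have hb : b * x * b = b := mul_mul_eq_self_of_forall_idempotent_mul_eq hab hreg hx
  have hba : b * x * a = b := by rw [hab (b * x) (.mul_of_mul_mul_eq_self hb), hb]
  have hL : leftIdeal (a * x) = leftIdeal (b * x) := by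
    apply leftIdeal_eq_of_mul_eq_of_mul_eq
    · rw [← mul_assoc, ← ha]
    · rw [← mul_assoc, hba]
  have hax : a * x = b * x := huni _ _ (IsIdempotentElem.mul_of_mul_mul_eq_self hx)
    (IsIdempotentElem.mul_of_mul_mul_eq_self hb) hL
  rw [ha, hax, hb]

end NotSeparated

end Semigroup

/-- In an `L`-unipotent semigroup, distinct elements are separated by left multiplication
by some idempotent; in particular the semigroup is left reductive. -/
theorem stmt0 {S : Type*} [Semigroup S] (hS : IsLUnipotent S) :
    (∀ a b : S, a ≠ b → ∃ f : S, f * f = f ∧ f * a ≠ f * b) ∧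
    (∀ a b : S, (∀ x : S, x * a = x * b) → a = b) := by
  have separated : ∀ a b : S, a ≠ b → ∃ f : S, f * f = f ∧ f * a ≠ f * b := by
    intro a b hne
    by_contra! h
    exact hne (eq_of_forall_idempotent_mul_eq h hS)
  refine ⟨separated, fun a b h ↦ ?_⟩
  by_contra hne
  obtain ⟨f, -, hf⟩ := separated a b hne
  exact hf (h f)
end

section
/- Let S be an L-unipotent semigroup and a, b ∈ S. Then a ≤ b in the natural partial order (i.e., there exist idempotents e, f ∈ S with a = b*e and a = f*b) if and only if there exists an idempotent f ∈ S with a = f*b. -/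
/-- The principal right ideal `aS = {a*x : x ∈ S}` of an element of a semigroup. -/
def rightIdeal {S : Type*} [Semigroup S] (a : S) : Set S := {y | ∃ x : S, y = a * x}

/-!
In an `L`-unipotent semigroup the idempotents satisfy `e * f * e = f * e`: the sandwich idempotent
`x = e * y * f`, for `y` an inverse of `f * e`, is `L`-related to the idempotent `f * x`, so
`f * x = x`, and then `f * e = x * (f * e)` is absorbed by `e` on the left. Given `a = f * b` with
`f` idempotent, choose an inverse `b'` of `b`; applying this identity to the idempotents `b * b'`
and `f` shows `f * b = b * (b' * f * b)`, and `b' * f * b` is idempotent.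
-/

section

variable {S : Type*} [Semigroup S]

lemma leftIdeal_eq_of_mul_eq {p q : S} (h₁ : p * q = p) (h₂ : q * p = q) :
    leftIdeal p = leftIdeal q := by
  ext y
  constructor
  · rintro ⟨x, rfl⟩
    exact ⟨x * p, by rw [mul_assoc, h₁]⟩
  · rintro ⟨x, rfl⟩
    exact ⟨x * q, by rw [mul_assoc, h₂]⟩

lemma IsRegularSemigroup.exists_inverse (hreg : IsRegularSemigroup S) (u : S) :
    ∃ v : S, u * v * u = u ∧ v * u * v = v := by
  obtain ⟨x, hx⟩ := hreg u
  refine ⟨x * u * x, ?_, ?_⟩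
  · calc u * (x * u * x) * u = (u * x * u) * x * u := by simp only [mul_assoc]
      _ = u := by rw [hx, hx]
  · calc x * u * x * u * (x * u * x) = x * ((u * x * u) * x * u) * x := by simp only [mul_assoc]
      _ = x * u * x := by rw [hx, hx]

lemma IsRegularSemigroup.exists_idempotent_sandwich (hreg : IsRegularSemigroup S) {e f : S}
    (he : IsIdempotentElem e) (hf : IsIdempotentElem f) :
    ∃ x : S, IsIdempotentElem x ∧ e * x = x ∧ x * f = x ∧ f * e * x * (f * e) = f * e := by
  obtain ⟨y, hyu, huy⟩ := hreg.exists_inverse (f * e)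
  refine ⟨e * y * f, ?_, ?_, ?_, ?_⟩
  · calc e * y * f * (e * y * f) = e * (y * (f * e) * y) * f := by simp only [mul_assoc]
      _ = e * y * f := by rw [huy]
  · simp only [← mul_assoc, he.eq]
  · simp only [mul_assoc, hf.eq]
  · calc f * e * (e * y * f) * (f * e) = f * (e * e) * y * (f * f) * e := by simp only [mul_assoc]
      _ = f * e * y * (f * e) := by rw [he.eq, hf.eq]; simp only [mul_assoc]
      _ = f * e := hyu

lemma IsLUnipotent.eq_of_mul_eq (hS : IsLUnipotent S) {e f : S}
    (he : IsIdempotentElem e) (hf : IsIdempotentElem f) (hef : e * f = e) (hfe : f * e = f) :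
    e = f :=
  hS.2 e f he hf (leftIdeal_eq_of_mul_eq hef hfe)

lemma IsLUnipotent.mul_mul_eq_of_isIdempotentElem (hS : IsLUnipotent S) {e f : S}
    (he : IsIdempotentElem e) (hf : IsIdempotentElem f) : e * (f * e) = f * e := by
  obtain ⟨x, hx, hex, hxf, hux⟩ := hS.1.exists_idempotent_sandwich he hf
  have hfx : f * x = x := by
    have hfx_idem : IsIdempotentElem (f * x) := by
      calc f * x * (f * x) = f * (x * f) * x := by simp only [mul_assoc]
        _ = f * x := by rw [hxf, mul_assoc, hx.eq]
    refine hS.eq_of_mul_eq hfx_idem hx ?_ ?_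
    · rw [mul_assoc, hx.eq]
    · rw [← mul_assoc, hxf, hx.eq]
  have hxu : x * (f * e) = f * e := by
    calc x * (f * e) = f * e * x * (f * e) := by rw [mul_assoc f e x, hex, hfx]
      _ = f * e := hux
  rw [← hxu, ← mul_assoc, hex]

lemma IsLUnipotent.exists_idempotent_mul_eq (hS : IsLUnipotent S) {f : S}
    (hf : IsIdempotentElem f) (b : S) : ∃ e : S, IsIdempotentElem e ∧ f * b = b * e := by
  obtain ⟨b', hbb', -⟩ := hS.1.exists_inverse b
  have hg : IsIdempotentElem (b * b') := by
    calc b * b' * (b * b') = b * b' * b * b' := by simp only [mul_assoc]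
      _ = b * b' := by rw [hbb']
  have hfb : f * b = b * (b' * f * b) := by
    calc f * b = f * (b * b') * b := by rw [mul_assoc f, hbb']
      _ = b * b' * (f * (b * b')) * b := by rw [hS.mul_mul_eq_of_isIdempotentElem hg hf]
      _ = b * b' * f * (b * b' * b) := by simp only [mul_assoc]
      _ = b * (b' * f * b) := by rw [hbb']; simp only [mul_assoc]
  refine ⟨b' * f * b, ?_, hfb⟩
  calc b' * f * b * (b' * f * b) = b' * f * (b * (b' * f * b)) := by simp only [mul_assoc]
    _ = b' * f * b := by rw [← hfb, ← mul_assoc, mul_assoc b' f f, hf.eq]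

end

/-- In an `L`-unipotent semigroup, `a ≤ b` in the natural partial order iff
`a = f*b` for some idempotent `f`. -/
theorem stmt2 {S : Type*} [Semigroup S] (hS : IsLUnipotent S) (a b : S) :
    ((∃ e : S, e * e = e ∧ a = b * e) ∧ (∃ f : S, f * f = f ∧ a = f * b)) ↔
      ∃ f : S, f * f = f ∧ a = f * b := by
  refine ⟨And.right, fun hf ↦ ⟨?_, hf⟩⟩
  obtain ⟨f, hf, rfl⟩ := hf
  exact hS.exists_idempotent_mul_eq hf b
end

section
/- A regular semigroup S is L-unipotent if and only if for every a ∈ S and all inverses a', a'' of a one has a'*a = a''*a. -/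
/-!
If `a'` is an inverse of `a`, then `a'a` is an idempotent generating the same left ideal as `a`,
so in an `L`-unipotent semigroup `a'a` is determined by `a`. Conversely, if `e` and `f` are
`L`-related idempotents, then `ef = e` and `fe = f`, so both `e` and `f` are inverses of `e`;
comparing `e * e` with `f * e` gives `e = f`.
-/

section Semigroup

variable {S : Type*} [Semigroup S]

theorem IsIdempotentElem.mem_leftIdeal_self {e : S} (he : IsIdempotentElem e) :
    e ∈ leftIdeal e :=
  ⟨e, he.eq.symm⟩

theorem IsIdempotentElem.mul_eq_of_mem_leftIdeal {e f : S} (hf : IsIdempotentElem f)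
    (hef : e ∈ leftIdeal f) : e * f = e := by
  obtain ⟨x, rfl⟩ := hef
  rw [mul_assoc, hf.eq]

theorem leftIdeal_mul_eq_of_mul_mul_eq {a a' : S} (h : a * a' * a = a) :
    leftIdeal (a' * a) = leftIdeal a := by
  ext y
  constructor
  · rintro ⟨x, rfl⟩
    exact ⟨x * a', (mul_assoc x a' a).symm⟩
  · rintro ⟨x, rfl⟩
    refine ⟨x * a, ?_⟩
    rw [mul_assoc x a, ← mul_assoc a, h]

theorem isIdempotentElem_mul_of_mul_mul_eq {a a' : S} (h : a' * a * a' = a') :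
    IsIdempotentElem (a' * a) := by
  rw [IsIdempotentElem, ← mul_assoc, h]

end Semigroup

/-- A regular semigroup is `L`-unipotent iff `a'*a = a''*a` for all `a` and all inverses
`a', a''` of `a`. -/
theorem stmt7 {S : Type*} [Semigroup S] (hS : IsRegularSemigroup S) :
    IsLUnipotent S ↔ ∀ a a' a'' : S,
      (a * a' * a = a ∧ a' * a * a' = a') → (a * a'' * a = a ∧ a'' * a * a'' = a'') →
      a' * a = a'' * a := by
  constructor
  · rintro ⟨-, hU⟩ a a' a'' ⟨h₁, h₂⟩ ⟨h₃, h₄⟩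
    apply hU _ _ (isIdempotentElem_mul_of_mul_mul_eq h₂) (isIdempotentElem_mul_of_mul_mul_eq h₄)
    rw [leftIdeal_mul_eq_of_mul_mul_eq h₁, leftIdeal_mul_eq_of_mul_mul_eq h₃]
  · refine fun h ↦ ⟨hS, fun e f he hf hL ↦ ?_⟩
    have hef : e * f = e := IsIdempotentElem.mul_eq_of_mem_leftIdeal hf <|
      hL ▸ IsIdempotentElem.mem_leftIdeal_self he
    have hfe : f * e = f := IsIdempotentElem.mul_eq_of_mem_leftIdeal he <|
      hL ▸ IsIdempotentElem.mem_leftIdeal_self hf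
    have hee : e * e * e = e := by rw [he, he]
    have f_inv : e * f * e = e ∧ f * e * f = f := ⟨by rw [hef, he], by rw [hfe, hf]⟩
    simpa only [he, hfe] using h e e f ⟨hee, hee⟩ f_inv
end

section
/- A regular semigroup S is L-unipotent if and only if for every a ∈ S, all inverses a', a'' of a, and every idempotent e ∈ S, one has a'*e*a = a''*e*a. -/
/-!
In an `L`-unipotent regular semigroup the idempotents satisfy `e*f*e = f*e`: for an inverse `y`
of `f*e`, the idempotent `g = e*y*f` is `L`-related to the idempotent `f*g`, so `g = f*g`, and
then `f*e = f*g*e = g*e` is fixed by left multiplication by `e`. Moreover all inverses `x` of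
`a` give the same idempotent `x*a`, since these are `L`-related. Conjugating `e` by the
idempotent `a*a'` then yields `a'*e*a = a''*e*a`. Conversely, if `e` and `f` are `L`-related
idempotents then `f` and `e` are both inverses of `e`, and the identity with `a = e` reads
`f*e*e = e*e*e`, i.e. `f = e`.
-/

section

variable {S : Type*} [Semigroup S]

theorem leftIdeal_eq_of_mul_eq_s8 {e f : S} (hef : e * f = e) (hfe : f * e = f) :
    leftIdeal e = leftIdeal f := by
  ext y
  constructor
  · rintro ⟨z, rfl⟩
    exact ⟨z * e, by rw [mul_assoc, hef]⟩
  · rintro ⟨z, rfl⟩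
    exact ⟨z * f, by rw [mul_assoc, hfe]⟩

theorem mul_eq_of_leftIdeal_eq {e f : S} (he : e * e = e) (hf : f * f = f)
    (h : leftIdeal e = leftIdeal f) : e * f = e := by
  obtain ⟨z, hz⟩ : e ∈ leftIdeal f := h ▸ ⟨e, he.symm⟩
  rw [hz, mul_assoc, hf]

theorem exists_inverse_of_mul_mul_eq {a x : S} (h : a * x * a = a) :
    ∃ y, a * y * a = a ∧ y * a * y = y :=
  ⟨x * a * x, by grind, by grind⟩

namespace IsLUnipotent

theorem eq_of_mul_eq_s8 (hS : IsLUnipotent S) {e f : S} (he : e * e = e) (hf : f * f = f)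
    (hef : e * f = e) (hfe : f * e = f) : e = f :=
  hS.2 e f he hf (leftIdeal_eq_of_mul_eq_s8 hef hfe)

theorem mul_eq_mul_of_mul_mul_eq (hS : IsLUnipotent S) {a x y : S} (hx : a * x * a = a)
    (hy : a * y * a = a) : x * a = y * a :=
  hS.eq_of_mul_eq_s8 (by grind) (by grind) (by grind) (by grind)

theorem mul_mul_self_eq (hS : IsLUnipotent S) {e f : S} (he : e * e = e) (hf : f * f = f) :
    e * f * e = f * e := by
  obtain ⟨x, hx⟩ := hS.1 (f * e)
  obtain ⟨y, hy₁, hy₂⟩ := exists_inverse_of_mul_mul_eq hx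
  -- `g = e*y*f` is an idempotent `L`-related to `f*g`
  have hg : e * y * f = f * (e * y * f) :=
    hS.eq_of_mul_eq_s8 (by grind) (by grind) (by grind) (by grind)
  have hfe : f * e = e * y * f * e := by grind
  grind

theorem inverse_mul_mul_eq (hS : IsLUnipotent S) {a x y e : S}
    (hx : a * x * a = a ∧ x * a * x = x) (hy : a * y * a = a) (he : e * e = e) :
    x * e * a = y * e * a := by
  -- `y*e*a = y*(a*x*e*a*x)*a` by the band identity, and `y*a = x*a` turns this into `x*e*a`
  have hxy : x * a = y * a := hS.mul_eq_mul_of_mul_mul_eq hx.1 hy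
  have hband : a * x * e * (a * x) = e * (a * x) := hS.mul_mul_self_eq (by grind) he
  grind

end IsLUnipotent

end

/-- A regular semigroup is `L`-unipotent iff `a'*e*a = a''*e*a` for all `a`, all inverses
`a', a''` of `a`, and every idempotent `e`. -/
theorem stmt8 {S : Type*} [Semigroup S] (hS : IsRegularSemigroup S) :
    IsLUnipotent S ↔ ∀ a a' a'' e : S,
      (a * a' * a = a ∧ a' * a * a' = a') → (a * a'' * a = a ∧ a'' * a * a'' = a'') →
      e * e = e → a' * e * a = a'' * e * a := by
  refine ⟨fun hL a a' a'' e h' h'' he => hL.inverse_mul_mul_eq h' h''.1 he, fun h => ⟨hS, ?_⟩⟩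
  intro e f he hf hL
  have hef : e * f = e := mul_eq_of_leftIdeal_eq he hf hL
  have hfe : f * e = f := mul_eq_of_leftIdeal_eq hf he hL.symm
  have key := h e f e e ⟨by rw [hef, he], by rw [hfe, hf]⟩ ⟨by rw [he, he], by rw [he, he]⟩ he
  rw [hfe, hfe, he, he] at key
  exact key.symm
end

section
/- Fix n : ℕ. The set of cones in the full powerset category of Fin n is closed under the composition γ·δ (the composite of two cones is again a cone), and the map φ sending a cone γ with vertex Z to the function Fin n → Fin n given by i ↦ γ_{Fin n}(i) (viewed as an element of Fin n) is a bijection from the set of cones onto the set of all functions Fin n → Fin n which satisfies φ(γ·δ) = φ(δ) ∘ φ(γ). Hence the semigroup of cones under the composition γ·δ is isomorphic to the full transformation monoid T_n. -/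
/-- The data of a cone in the full powerset category of `Fin n`: a vertex `Z ⊆ Fin n`
together with, for every subset `A ⊆ Fin n`, a component function `A → Fin n` taking
values in the vertex. -/
structure ConeData (n : ℕ) where
  vertex : Set (Fin n)
  comp : ∀ A : Set (Fin n), A → Fin n
  mem_vertex : ∀ (A : Set (Fin n)) (a : A), comp A a ∈ vertex

/-- `γ` is a cone: its components are compatible with inclusions of subsets, and some
component `γ_C : C → Z` is a bijection onto the vertex `Z`. -/
def IsCone {n : ℕ} (γ : ConeData n) : Prop :=
  (∀ (A B : Set (Fin n)) (h : A ⊆ B) (a : A), γ.comp A a = γ.comp B ⟨a.1, h a.2⟩) ∧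
  ∃ C : Set (Fin n), Function.Injective (γ.comp C) ∧ Set.range (γ.comp C) = γ.vertex

/-- The composite `γ·δ` of two cones: its vertex is `{δ_{Z₁}(z) : z ∈ Z₁}` where `Z₁` is
the vertex of `γ`, and its component at `A` is `a ↦ δ_{Z₁}(γ_A(a))`. -/
def coneMul {n : ℕ} (γ δ : ConeData n) : ConeData n where
  vertex := Set.range (δ.comp γ.vertex)
  comp := fun A a => δ.comp γ.vertex ⟨γ.comp A a, γ.mem_vertex A a⟩
  mem_vertex := fun A a => ⟨⟨γ.comp A a, γ.mem_vertex A a⟩, rfl⟩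

/-- The component of a cone at the full set, viewed as a transformation of `Fin n`. -/
def topFun {n : ℕ} (γ : ConeData n) : Fin n → Fin n :=
  fun i => γ.comp Set.univ ⟨i, Set.mem_univ i⟩

/-!
A cone is determined by its top component `f = γ_{Fin n}`: compatibility forces every
component to be a restriction of `f`, and the bijective component `γ_C` forces the vertex
to be `range f`. Conversely every `f` arises this way, taking for `C` a transversal of the
fibres of `f`. Under this identification the composite cone has top component
`δ_{Fin n} ∘ γ_{Fin n}`.
-/

open Set Function

attribute [ext] ConeData

namespace ConeData

variable {n : ℕ}

def ofFun (f : Fin n → Fin n) : ConeData n where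
  vertex := range f
  comp A := A.domRestrict f
  mem_vertex _ a := mem_range_self a.1

lemma coneMul_ofFun (f g : Fin n → Fin n) : coneMul (ofFun f) (ofFun g) = ofFun (g ∘ f) := by
  ext : 1
  · exact ((range_comp g f).trans (image_eq_range g (range f))).symm
  · rfl

end ConeData

open ConeData

variable {α β : Type*}

lemma exists_injective_domRestrict_range_eq (f : α → β) :
    ∃ C : Set α, Injective (C.domRestrict f) ∧ range (C.domRestrict f) = range f := by
  obtain ⟨C, hC, hinj⟩ := exists_image_eq_and_injOn univ f
  exact ⟨C, hinj.injective, by rw [range_domRestrict, hC, image_univ]⟩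

variable {n : ℕ} {γ δ : ConeData n}

lemma isCone_ofFun (f : Fin n → Fin n) : IsCone (ofFun f) :=
  ⟨fun _ _ _ _ => rfl, exists_injective_domRestrict_range_eq f⟩

lemma IsCone.comp_eq_topFun (hγ : IsCone γ) (A : Set (Fin n)) (a : A) :
    γ.comp A a = topFun γ a :=
  hγ.1 A univ (subset_univ A) a

lemma IsCone.vertex_eq_range (hγ : IsCone γ) : γ.vertex = range (topFun γ) := by
  obtain ⟨C, -, hC⟩ := hγ.2
  refine Subset.antisymm ?_ ?_
  · rw [← hC]
    rintro _ ⟨c, rfl⟩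
    exact ⟨c, (hγ.comp_eq_topFun C c).symm⟩
  · rintro _ ⟨x, rfl⟩
    exact γ.mem_vertex univ ⟨x, mem_univ x⟩

lemma IsCone.eq_ofFun (hγ : IsCone γ) : γ = ofFun (topFun γ) := by
  ext : 1
  · exact hγ.vertex_eq_range
  · funext A a
    exact hγ.comp_eq_topFun A a

lemma isCone_coneMul (hγ : IsCone γ) (hδ : IsCone δ) : IsCone (coneMul γ δ) := by
  rw [hγ.eq_ofFun, hδ.eq_ofFun, coneMul_ofFun]
  exact isCone_ofFun _

lemma topFun_coneMul (hγ : IsCone γ) (hδ : IsCone δ) :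
    topFun (coneMul γ δ) = topFun δ ∘ topFun γ := by
  rw [hγ.eq_ofFun, hδ.eq_ofFun, coneMul_ofFun]
  rfl

/-- Cones are closed under composition, and taking the top component is a bijection from
cones onto all transformations of `Fin n` which is anti-multiplicative in the categorical
order, i.e. a homomorphism onto `T_n` with left-to-right composition:
`φ(γ·δ) = φ(δ) ∘ φ(γ)`. Hence the semigroup of cones is isomorphic to `T_n`. -/
theorem stmt12 (n : ℕ) :
    (∀ γ δ : ConeData n, IsCone γ → IsCone δ → IsCone (coneMul γ δ)) ∧
    Function.Bijective (fun γ : {γ : ConeData n // IsCone γ} => topFun γ.1) ∧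
    (∀ γ δ : ConeData n, IsCone γ → IsCone δ →
      topFun (coneMul γ δ) = topFun δ ∘ topFun γ) := by
  refine ⟨fun _ _ => isCone_coneMul, ⟨?_, ?_⟩, fun _ _ => topFun_coneMul⟩
  · rintro ⟨γ, hγ⟩ ⟨δ, hδ⟩ h
    exact Subtype.ext (hγ.eq_ofFun.trans ((congrArg ofFun h).trans hδ.eq_ofFun.symm))
  · exact fun f => ⟨⟨ofFun f, isCone_ofFun f⟩, rfl⟩
end

section
/- Let S be an L-unipotent semigroup. Then for all a, b ∈ S there exists c ∈ S with aS ∩ bS = cS; concretely, if e is an idempotent with eS = aS and f is an idempotent with fS = bS, then aS ∩ bS = (e*f)S. Hence the poset of principal right ideals of S ordered by inclusion is a meet-semilattice, with meet of eS and fS (e, f idempotent) given by (e*f)S. -/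
/-!
By regularity, for idempotents `e, f` there is an idempotent `x` with `f * x = x = x * e` and
`(e * f) * x * (e * f) = e * f` (an element of the sandwich set of `e` and `f`). Then `e * x` is
an idempotent `L`-related to `x`, so `L`-unipotence forces `e * x = x`, whence
`e * f = x * (e * f)` and therefore `f * (e * f) = e * f`. Since every `y ∈ eS ∩ fS` is fixed by
`e` and `f`, we get `y = (e * f) * y`, and together with that identity `eS ∩ fS = (e * f)S`.
-/

section

variable {S : Type*} [Semigroup S]

theorem leftIdeal_subset_of_eq_mul {a b s : S} (h : a = s * b) : leftIdeal a ⊆ leftIdeal b := by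
  rintro _ ⟨x, rfl⟩
  exact ⟨x * s, by rw [h, mul_assoc]⟩

theorem rightIdeal_subset_of_eq_mul {a b s : S} (h : a = b * s) :
    rightIdeal a ⊆ rightIdeal b := by
  rintro _ ⟨x, rfl⟩
  exact ⟨s * x, by rw [h, mul_assoc]⟩

theorem IsRegularSemigroup.exists_idempotent_rightIdeal_eq (hS : IsRegularSemigroup S) (a : S) :
    ∃ e : S, IsIdempotentElem e ∧ rightIdeal e = rightIdeal a := by
  obtain ⟨u, hu⟩ := hS a
  refine ⟨a * u, by rw [IsIdempotentElem, ← mul_assoc, hu], ?_⟩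
  exact (rightIdeal_subset_of_eq_mul rfl).antisymm
    (rightIdeal_subset_of_eq_mul (s := a) (by rw [hu]))

theorem IsRegularSemigroup.exists_mem_sandwich (hS : IsRegularSemigroup S) {e f : S}
    (he : IsIdempotentElem e) (hf : IsIdempotentElem f) :
    ∃ x : S, IsIdempotentElem x ∧ f * x = x ∧ x * e = x ∧ e * f * x * (e * f) = e * f := by
  obtain ⟨u, hu⟩ := hS (e * f)
  have hu₀ : e * (f * (u * (e * f))) = e * f := by simpa only [mul_assoc] using hu
  have hu₁ (z : S) : e * (f * (u * (e * (f * z)))) = e * (f * z) := by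
    simpa only [mul_assoc] using congrArg (· * z) hu
  have he₁ (z : S) : e * (e * z) = e * z := by rw [← mul_assoc, he.eq]
  have hf₁ (z : S) : f * (f * z) = f * z := by rw [← mul_assoc, hf.eq]
  refine ⟨f * (u * (e * f) * u) * e, ?_, ?_, ?_, ?_⟩
  · simp only [IsIdempotentElem, mul_assoc, hu₁]
  · simp only [mul_assoc, hf₁]
  · simp only [mul_assoc, he.eq]
  · simp only [mul_assoc, he₁, hf₁, hu₀, hu₁]

theorem IsLUnipotent.mul_eq_self_of_mul_eq_self (hS : IsLUnipotent S) {x e : S}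
    (hx : IsIdempotentElem x) (hxe : x * e = x) : e * x = x := by
  have hex : IsIdempotentElem (e * x) := by
    rw [IsIdempotentElem, mul_assoc, ← mul_assoc x, hxe, hx.eq]
  refine (hS.2 x (e * x) hx hex ?_).symm
  refine (leftIdeal_subset_of_eq_mul (s := x) ?_).antisymm (leftIdeal_subset_of_eq_mul rfl)
  rw [← mul_assoc, hxe, hx.eq]

theorem IsLUnipotent.mul_mul_self_of_isIdempotentElem (hS : IsLUnipotent S) {e f : S}
    (he : IsIdempotentElem e) (hf : IsIdempotentElem f) : f * (e * f) = e * f := by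
  obtain ⟨x, hx, hfx, hxe, hefx⟩ := hS.1.exists_mem_sandwich he hf
  have hef : e * f = x * (e * f) := by
    calc e * f = e * (f * x) * (e * f) := by rw [← mul_assoc e f x, hefx]
      _ = x * (e * f) := by rw [hfx, hS.mul_eq_self_of_mul_eq_self hx hxe]
  calc f * (e * f) = f * x * (e * f) := by rw [mul_assoc, ← hef]
    _ = e * f := by rw [hfx, ← hef]

theorem IsLUnipotent.rightIdeal_inter_rightIdeal (hS : IsLUnipotent S) {e f : S}
    (he : IsIdempotentElem e) (hf : IsIdempotentElem f) :
    rightIdeal e ∩ rightIdeal f = rightIdeal (e * f) := by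
  refine subset_antisymm ?_ fun y hy => ⟨rightIdeal_subset_of_eq_mul rfl hy, ?_⟩
  · rintro y ⟨⟨s, rfl⟩, ⟨t, ht⟩⟩
    refine ⟨e * s, ?_⟩
    rw [mul_assoc, ht, ← mul_assoc f, hf.eq, ← ht, ← mul_assoc, he.eq]
  · exact rightIdeal_subset_of_eq_mul (hS.mul_mul_self_of_isIdempotentElem he hf).symm hy

end

/-- In an `L`-unipotent semigroup the principal right ideals form a meet-semilattice under
inclusion: `aS ∩ bS = cS` for some `c`; concretely, if `eS = aS` and `fS = bS` with
`e, f` idempotent, then `aS ∩ bS = (e*f)S`. -/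
theorem stmt16 {S : Type*} [Semigroup S] (hS : IsLUnipotent S) :
    (∀ a b : S, ∃ c : S, rightIdeal a ∩ rightIdeal b = rightIdeal c) ∧
    (∀ a b e f : S, e * e = e → f * f = f →
      rightIdeal e = rightIdeal a → rightIdeal f = rightIdeal b →
      rightIdeal a ∩ rightIdeal b = rightIdeal (e * f)) := by
  refine ⟨fun a b => ?_, fun a b e f he hf hea hfb => ?_⟩
  · obtain ⟨e, he, hea⟩ := hS.1.exists_idempotent_rightIdeal_eq a
    obtain ⟨f, hf, hfb⟩ := hS.1.exists_idempotent_rightIdeal_eq b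
    refine ⟨e * f, ?_⟩
    rw [← hea, ← hfb, hS.rightIdeal_inter_rightIdeal he hf]
  · rw [← hea, ← hfb, hS.rightIdeal_inter_rightIdeal he hf]
end
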